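/- Shuffle identity: for nonzero elements p₁,...,p_{k+l} of a field such that all relevant partial sums are nonzero, one has 1/(p₁(p₁+p₂)⋯(p₁+⋯+p_k)) · 1/(p_{k+1}(p_{k+1}+p_{k+2})⋯(p_{k+1}+⋯+p_{k+l})) = ∑_{σ ∈ Sh(k,l)} 1/(p_{σ(1)}(p_{σ(1)}+p_{σ(2)})⋯(p_{σ(1)}+⋯+p_{σ(k+l)})), where the sum is over all (k,l)-shuffles σ of {1,...,k+l}. -/

import Mathlib

open Finset

/-- A (k,l)-shuffle: a permutation of Fin (k+l) preserving the relative order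
    of positions whose images lie in the same block {0,…,k-1} or {k,…,k+l-1}.
    Equivalently, the sequence σ(0),…,σ(k+l-1) is a shuffle of the two blocks. -/
def IsShuffle (k l : ℕ) (σ : Equiv.Perm (Fin (k + l))) : Prop :=
  ∀ i j : Fin (k + l), i < j → (((σ i : ℕ) < k ↔ (σ j : ℕ) < k) → σ i < σ j)

instance (k l : ℕ) (σ : Equiv.Perm (Fin (k + l))) : Decidable (IsShuffle k l σ) := by
  unfold IsShuffle; infer_instance

namespace ShufAux

variable {α : Type*}

def shuffles : List α → List α → List (List α)
  | [], b => [b]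
  | x :: a, [] => [x :: a]
  | x :: a, y :: b =>
      ((shuffles a (y :: b)).map (x :: ·)) ++ ((shuffles (x :: a) b).map (y :: ·))

theorem shuffles_ne_nil (a b : List α) : shuffles a b ≠ [] := by
  match a, b with
  | [], b => simp [shuffles]
  | x :: a, [] => simp [shuffles]
  | x :: a, y :: b =>
    simp only [shuffles, ne_eq, List.append_eq_nil_iff, List.map_eq_nil_iff, not_and]
    intro h; exact absurd h (shuffles_ne_nil a (y :: b))

theorem cons_left_mem {c a b : List α} (x : α) (h : c ∈ shuffles a b) :
    (x :: c) ∈ shuffles (x :: a) b := by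
  cases b with
  | nil =>
    simp [shuffles] at h ⊢
    cases a <;> simp_all [shuffles]
  | cons y b => simp only [shuffles, List.mem_append, List.mem_map]; exact Or.inl ⟨c, h, rfl⟩

theorem cons_right_mem {c a b : List α} (y : α) (h : c ∈ shuffles a b) :
    (y :: c) ∈ shuffles a (y :: b) := by
  cases a with
  | nil => simp_all [shuffles]
  | cons x a => simp only [shuffles, List.mem_append, List.mem_map]; exact Or.inr ⟨c, h, rfl⟩

theorem of_mem_shuffles : ∀ {a b c : List α}, c ∈ shuffles a b →
    a.Sublist c ∧ b.Sublist c ∧ c.Perm (a ++ b)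
  | [], b, c, h => by simp [shuffles] at h; subst h; simp
  | x :: a, [], c, h => by simp [shuffles] at h; subst h; simp
  | x :: a, y :: b, c, h => by
    simp only [shuffles, List.mem_append, List.mem_map] at h
    rcases h with ⟨d, hd, rfl⟩ | ⟨d, hd, rfl⟩
    · obtain ⟨h1, h2, h3⟩ := of_mem_shuffles hd
      exact ⟨List.cons_sublist_cons.2 h1, h2.trans (List.sublist_cons_self x d),
        by simpa using h3.cons x⟩
    · obtain ⟨h1, h2, h3⟩ := of_mem_shuffles hd
      refine ⟨h1.trans (List.sublist_cons_self y d), List.cons_sublist_cons.2 h2, ?_⟩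
      refine (h3.cons y).trans ?_
      -- y :: (x::a ++ b) ~ (x::a) ++ (y::b)
      simpa using (List.perm_middle (a := y) (l₁ := x :: a) (l₂ := b)).symm

theorem mem_shuffles_of : ∀ {c a b : List α}, (a ++ b).Nodup →
    a.Sublist c → b.Sublist c → c.Perm (a ++ b) → c ∈ shuffles a b
  | [], a, b, _, ha, hb, hp => by
    have : a ++ b = [] := hp.symm.eq_nil
    rcases List.append_eq_nil_iff.1 this with ⟨rfl, rfl⟩
    simp [shuffles]
  | z :: c, a, b, hn, ha, hb, hp => by
    have hcn : (z :: c).Nodup := hp.symm.nodup hn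
    have hz : z ∈ a ++ b := hp.subset (by simp)
    have hznc : z ∉ c := (List.nodup_cons.1 hcn).1
    rcases List.mem_append.1 hz with hza | hzb
    · cases a with
      | nil => simp at hza
      | cons a0 a' =>
        have hzb' : z ∉ b := by
          have := (List.nodup_append'.1 hn).2.2
          exact fun h => this hza h
        cases ha with
        | cons _ h => exact absurd (h.subset hza) hznc
        | cons_cons _ h =>
          have hb' : b.Sublist c := by
            cases hb with
            | cons _ h2 => exact h2
            | cons_cons _ h2 => exact absurd (by simp) hzb'
          have hp' : c.Perm (a' ++ b) := by
            refine List.Perm.cons_inv (a := z) ?_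
            simpa using hp
          have hn' : (a' ++ b).Nodup := by
            have : (a' ++ b).Sublist ((z :: a') ++ b) := by
              simpa using (List.sublist_cons_self z a').append_right b
            exact hn.sublist this
          exact cons_left_mem z (mem_shuffles_of hn' h hb' hp')
    · cases b with
      | nil => simp at hzb
      | cons b0 b' =>
        have hza' : z ∉ a := by
          have := (List.nodup_append'.1 hn).2.2
          exact fun h => this h hzb
        cases hb with
        | cons _ h => exact absurd (h.subset hzb) hznc
        | cons_cons _ h =>
          have ha' : a.Sublist c := by
            cases ha with
            | cons _ h2 => exact h2
            | cons_cons _ h2 => exact absurd (by simp) hza'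
          have hp' : c.Perm (a ++ b') := by
            refine List.Perm.cons_inv (a := z) ?_
            exact hp.trans (List.perm_middle (a := z) (l₁ := a) (l₂ := b'))
          have hn' : (a ++ b').Nodup := by
            have : (a ++ b').Sublist (a ++ z :: b') := by
              exact (List.sublist_cons_self z b').append_left a
            exact hn.sublist this
          exact cons_right_mem z (mem_shuffles_of hn' ha' h hp')

theorem sublist_eq_of_perm : ∀ {l s₁ s₂ : List α}, l.Nodup → s₁.Sublist l → s₂.Sublist l →
    s₁.Perm s₂ → s₁ = s₂
  | [], s₁, s₂, _, h1, h2, _ => by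
    simp [List.eq_nil_of_sublist_nil h1, List.eq_nil_of_sublist_nil h2]
  | x :: l, s₁, s₂, hn, h1, h2, hp => by
    have hxl : x ∉ l := (List.nodup_cons.1 hn).1
    have hln : l.Nodup := (List.nodup_cons.1 hn).2
    cases h1 with
    | cons _ h1' =>
      have hx1 : x ∉ s₁ := fun h => hxl (h1'.subset h)
      cases h2 with
      | cons _ h2' => exact sublist_eq_of_perm hln h1' h2' hp
      | cons_cons _ h2' => exact absurd (hp.mem_iff.2 (by simp)) hx1
    | cons_cons _ h1' =>
      cases h2 with
      | cons _ h2' =>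
        have hx2 : x ∉ s₂ := fun h => hxl (h2'.subset h)
        exact absurd (hp.mem_iff.1 (by simp)) hx2
      | cons_cons _ h2' =>
        have := sublist_eq_of_perm hln h1' h2' (hp.cons_inv)
        rw [this]

theorem shuffles_nodup : ∀ {a b : List α}, (a ++ b).Nodup → (shuffles a b).Nodup
  | [], b, _ => by simp [shuffles]
  | x :: a, [], _ => by simp [shuffles]
  | x :: a, y :: b, hn => by
    have hxy : x ≠ y := by
      have := (List.nodup_append'.1 hn).2.2
      exact fun h => this (a := x) (by simp) (by simp [h])
    have hn1 : (a ++ (y :: b)).Nodup := (List.nodup_cons.1 (by simpa using hn)).2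
    have hn2 : ((x :: a) ++ b).Nodup := by
      have : ((x :: a) ++ b).Sublist ((x :: a) ++ (y :: b)) :=
        (List.sublist_cons_self y b).append_left _
      exact hn.sublist this
    rw [shuffles, List.nodup_append']
    refine ⟨(shuffles_nodup hn1).map (fun _ _ h => by simpa using h),
      (shuffles_nodup hn2).map (fun _ _ h => by simpa using h), ?_⟩
    intro c hc hc'
    simp only [List.mem_map] at hc hc'
    obtain ⟨d, _, rfl⟩ := hc
    obtain ⟨e, _, he⟩ := hc'
    exact hxy (by injection he.symm)

theorem shuffles_map {β : Type*} (f : α → β) :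
    ∀ (a b : List α), shuffles (a.map f) (b.map f) = (shuffles a b).map (List.map f)
  | [], b => by simp [shuffles]
  | x :: a, [] => by simp [shuffles]
  | x :: a, y :: b => by
    rw [List.map_cons, List.map_cons, shuffles, shuffles]
    rw [← List.map_cons (f := f) (a := x) (l := a), ← List.map_cons (f := f) (a := y) (l := b)]
    rw [shuffles_map f a (y :: b), shuffles_map f (x :: a) b]
    simp [List.map_map, Function.comp_def]

variable {F : Type*} [Field F]

def S : List F → F
  | [] => 1
  | x :: t => (x + t.sum) * S t

def nzSuf : List F → Prop
  | [] => True
  | x :: t => (x + t.sum ≠ 0) ∧ nzSuf t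

theorem nzSuf_append_right : ∀ {u v : List F}, nzSuf (u ++ v) → nzSuf v
  | [], v, h => h
  | x :: u, v, h => nzSuf_append_right h.2

theorem S_ne_zero : ∀ {t : List F}, nzSuf t → S t ≠ 0
  | [], _ => one_ne_zero
  | x :: t, h => mul_ne_zero h.1 (S_ne_zero h.2)

theorem append_mem_shuffles : ∀ (a b : List α), a ++ b ∈ shuffles a b
  | [], b => by simp [shuffles]
  | x :: a, [] => by simp [shuffles]
  | x :: a, y :: b => by
    rw [List.cons_append, shuffles]
    exact List.mem_append_left _ (List.mem_map_of_mem (append_mem_shuffles a (y :: b)))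

theorem rappend_mem_shuffles : ∀ (a b : List α), b ++ a ∈ shuffles a b
  | [], b => by simp [shuffles]
  | x :: a, [] => by simp [shuffles]
  | x :: a, y :: b => by
    rw [List.cons_append, shuffles]
    exact List.mem_append_right _ (List.mem_map_of_mem (rappend_mem_shuffles (x :: a) b))

theorem alg (A B sa sb : F) (hA : A ≠ 0) (hB : B ≠ 0) (hAB : A + B ≠ 0) :
    (A*sa)⁻¹ * (B*sb)⁻¹ = (A+B)⁻¹ * (sa⁻¹ * (B*sb)⁻¹) + (A+B)⁻¹ * ((A*sa)⁻¹ * sb⁻¹) := by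
  have h : A⁻¹ * B⁻¹ = (A+B)⁻¹ * A⁻¹ + (A+B)⁻¹ * B⁻¹ := by
    field_simp; ring
  calc (A*sa)⁻¹ * (B*sb)⁻¹ = (A⁻¹ * B⁻¹) * (sa⁻¹ * sb⁻¹) := by
        rw [mul_inv, mul_inv]; ring
    _ = _ := by rw [h, mul_inv, mul_inv]; ring

theorem key : ∀ (a b : List F), (∀ c ∈ shuffles a b, nzSuf c) →
    (S a)⁻¹ * (S b)⁻¹ = ((shuffles a b).map (fun c => (S c)⁻¹)).sum
  | [], b, h => by simp [shuffles, S]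
  | x :: a, [], h => by simp [shuffles, S]
  | x :: a, y :: b, h => by
    have hab : nzSuf ((x :: a) ++ (y :: b)) := h _ (append_mem_shuffles _ _)
    have hba : nzSuf ((y :: b) ++ (x :: a)) := h _ (rappend_mem_shuffles _ _)
    have hA : nzSuf (x :: a) := nzSuf_append_right (u := y :: b) hba
    have hB : nzSuf (y :: b) := nzSuf_append_right (u := x :: a) hab
    set A := x + a.sum with hAdef
    set B := y + b.sum with hBdef
    have hA0 : A ≠ 0 := hA.1
    have hB0 : B ≠ 0 := hB.1
    have hAB : A + B ≠ 0 := by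
      have e : A + B = x + (a ++ y :: b).sum := by
        simp [hAdef, hBdef, List.sum_append]; ring
      rw [e]; exact hab.1
    have hSa : S a ≠ 0 := S_ne_zero hA.2
    have hSb : S b ≠ 0 := S_ne_zero hB.2
    have h1 : ∀ c ∈ shuffles a (y :: b), nzSuf c := fun c hc => (h _ (cons_left_mem x hc)).2
    have h2 : ∀ c ∈ shuffles (x :: a) b, nzSuf c := fun c hc => (h _ (cons_right_mem y hc)).2
    have IH1 := key a (y :: b) h1
    have IH2 := key (x :: a) b h2
    rw [shuffles, List.map_append, List.sum_append, List.map_map, List.map_map]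
    have e1 : ((shuffles a (y :: b)).map ((fun c => (S c)⁻¹) ∘ (x :: ·))).sum
        = (A + B)⁻¹ * ((shuffles a (y :: b)).map (fun c => (S c)⁻¹)).sum := by
      rw [← List.sum_map_mul_left]
      refine congrArg List.sum (List.map_congr_left fun c hc => ?_)
      have hcs : c.sum = a.sum + (y :: b).sum := by
        simpa using (of_mem_shuffles hc).2.2.sum_eq
      simp only [Function.comp_apply, S, hcs]
      rw [mul_inv]
      congr 1
      congr 1
      simp only [List.sum_cons, hAdef, hBdef]; ring
    have e2 : ((shuffles (x :: a) b).map ((fun c => (S c)⁻¹) ∘ (y :: ·))).sum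
        = (A + B)⁻¹ * ((shuffles (x :: a) b).map (fun c => (S c)⁻¹)).sum := by
      rw [← List.sum_map_mul_left]
      refine congrArg List.sum (List.map_congr_left fun c hc => ?_)
      have hcs : c.sum = x + (a.sum + b.sum) := by
        simpa using (of_mem_shuffles hc).2.2.sum_eq
      simp only [Function.comp_apply, S, hcs]
      rw [mul_inv]
      congr 1
      congr 1
      simp only [List.sum_cons, hAdef, hBdef]; ring
    rw [e1, e2, ← IH1, ← IH2]
    show (S (x :: a))⁻¹ * (S (y :: b))⁻¹ = _
    simp only [S, ← hAdef, ← hBdef]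
    exact alg A B (S a) (S b) hA0 hB0 hAB

open Finset in
theorem sum_Iic_castSucc {n : ℕ} (j : Fin n) (q : Fin (n + 1) → F) :
    ∑ i ∈ Finset.Iic (j.castSucc), q i = ∑ i ∈ Finset.Iic j, q i.castSucc := by
  have hmap : Finset.Iic (j.castSucc) = (Finset.Iic j).map Fin.castSuccEmb := by
    ext i
    simp only [Finset.mem_Iic, Finset.mem_map, ]
    constructor
    · intro hi
      have hlt : (i : ℕ) < n := by
        have : (i : ℕ) ≤ (j : ℕ) := hi
        omega
      refine ⟨⟨i, hlt⟩, ?_, ?_⟩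
      · have : (i : ℕ) ≤ (j : ℕ) := hi
        exact this
      · rfl
    · rintro ⟨i', hi', rfl⟩
      have : (i' : ℕ) ≤ (j : ℕ) := hi'
      show i'.castSucc ≤ j.castSucc
      exact Fin.castSucc_le_castSucc_iff.mpr hi'
  rw [hmap, Finset.sum_map]
  rfl

open Finset in
theorem S_rev : ∀ (n : ℕ) (q : Fin n → F),
    S ((List.ofFn q).reverse) = ∏ j, ∑ i ∈ Finset.Iic j, q i
  | 0, q => by simp [S]
  | n + 1, q => by
    rw [List.ofFn_succ', List.concat_eq_append, List.reverse_concat]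
    show (q (Fin.last n) + ((List.ofFn fun i => q i.castSucc).reverse).sum) * S _ = _
    rw [S_rev n (fun i => q i.castSucc), Fin.prod_univ_castSucc]
    have h1 : Finset.Iic (Fin.last n) = Finset.univ := by
      ext i; simp [Fin.le_last]
    have h2 : q (Fin.last n) + ((List.ofFn fun i => q i.castSucc).reverse).sum
        = ∑ i ∈ Finset.Iic (Fin.last n), q i := by
      rw [h1, List.sum_reverse, List.sum_ofFn, Fin.sum_univ_castSucc]
      ring
    rw [h2, mul_comm]
    congr 1
    exact Finset.prod_congr rfl fun j _ => (sum_Iic_castSucc j q).symm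

open Finset in
theorem nzSuf_rev : ∀ (n : ℕ) (q : Fin n → F),
    (∀ j, ∑ i ∈ Finset.Iic j, q i ≠ 0) → nzSuf ((List.ofFn q).reverse)
  | 0, q, _ => by simp [nzSuf]
  | n + 1, q, h => by
    rw [List.ofFn_succ', List.concat_eq_append, List.reverse_concat]
    refine ⟨?_, nzSuf_rev n (fun i => q i.castSucc) fun j => ?_⟩
    · have h1 : Finset.Iic (Fin.last n) = Finset.univ := by
        ext i; simp [Fin.le_last]
      have := h (Fin.last n)
      rw [h1] at this
      rw [List.sum_reverse, List.sum_ofFn]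
      rw [Fin.sum_univ_castSucc] at this
      intro hc; apply this; rw [← hc]; ring
    · rw [← sum_Iic_castSucc j q]; exact h _

section Blocks

open List

variable (k l : ℕ)

def X : List (Fin (k + l)) := List.ofFn (Fin.castAdd l)
def Y : List (Fin (k + l)) := List.ofFn (Fin.natAdd k)

variable {k l}

theorem mem_X {x : Fin (k + l)} : x ∈ X k l ↔ (x : ℕ) < k := by
  simp only [X, List.mem_ofFn, Set.mem_range]
  constructor
  · rintro ⟨i, rfl⟩; exact i.isLt
  · intro h; exact ⟨⟨x, h⟩, by ext; simp⟩

theorem mem_Y {x : Fin (k + l)} : x ∈ Y k l ↔ ¬ (x : ℕ) < k := by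
  simp only [Y, List.mem_ofFn, Set.mem_range]
  constructor
  · rintro ⟨i, rfl⟩; simp
  · intro h
    refine ⟨⟨(x : ℕ) - k, by omega⟩, ?_⟩
    ext; simp; omega

theorem nodup_X : (X k l).Nodup :=
  List.nodup_ofFn.2 fun i j hij => Fin.ext (by
    have := congrArg Fin.val hij; simpa using this)

theorem nodup_Y : (Y k l).Nodup :=
  List.nodup_ofFn.2 fun i j hij => Fin.ext (by
    have := congrArg Fin.val hij
    simp only [Fin.natAdd] at this
    omega)

theorem pairwise_X : (X k l).Pairwise (· < ·) :=
  List.pairwise_ofFn.2 fun i j hij => by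
    simp only [Fin.lt_def, Fin.coe_castAdd]
    exact hij

theorem pairwise_Y : (Y k l).Pairwise (· < ·) :=
  List.pairwise_ofFn.2 fun i j hij => by
    simp only [Fin.lt_def, Fin.natAdd]
    have : (i : ℕ) < j := hij
    omega

theorem nodup_blocks : ((X k l).reverse ++ (Y k l).reverse).Nodup := by
  rw [List.nodup_append']
  refine ⟨List.nodup_reverse.2 nodup_X, List.nodup_reverse.2 nodup_Y, fun x hx hy => ?_⟩
  rw [List.mem_reverse] at hx hy
  exact (mem_Y.1 hy) (mem_X.1 hx)

instance : IsAntisymm (Fin (k + l)) (· < ·) :=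
  ⟨fun a b h1 h2 => absurd h1 (asymm h2)⟩

theorem mem_shuffles_of_isShuffle (σ : Equiv.Perm (Fin (k + l))) (h : IsShuffle k l σ) :
    (List.ofFn ⇑σ).reverse ∈ shuffles (X k l).reverse (Y k l).reverse := by
  have hnofn : (List.ofFn ⇑σ).Nodup := List.nodup_ofFn.2 σ.injective
  have hmem : ∀ v : Fin (k + l), v ∈ List.ofFn ⇑σ := fun v => by
    rw [List.mem_ofFn]; exact ⟨σ.symm v, σ.apply_symm_apply v⟩
  have hfX : (List.ofFn ⇑σ).filter (fun v : Fin (k + l) => decide ((v : ℕ) < k)) = X k l := by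
    refine (fun hp hs => List.Perm.eq_of_pairwise (le := (· < ·)) (fun a b _ _ h1 h2 => absurd h1 (asymm h2)) hs pairwise_X hp) ?_ ?_
    · rw [List.perm_ext_iff_of_nodup (hnofn.filter _) nodup_X]
      intro v
      simp only [List.mem_filter, decide_eq_true_eq, mem_X]
      exact ⟨fun h => h.2, fun h => ⟨hmem v, h⟩⟩
    · refine List.pairwise_filter.2 (List.pairwise_ofFn.2 fun i j hij h1 h2 => ?_)
      exact h i j hij (iff_of_true (of_decide_eq_true h1) (of_decide_eq_true h2))
  have hfY : (List.ofFn ⇑σ).filter (fun v : Fin (k + l) => decide (¬ (v : ℕ) < k)) = Y k l := by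
    refine (fun hp hs => List.Perm.eq_of_pairwise (le := (· < ·)) (fun a b _ _ h1 h2 => absurd h1 (asymm h2)) hs pairwise_Y hp) ?_ ?_
    · rw [List.perm_ext_iff_of_nodup (hnofn.filter _) nodup_Y]
      intro v
      simp only [List.mem_filter, decide_eq_true_eq, mem_Y]
      exact ⟨fun h => h.2, fun h => ⟨hmem v, h⟩⟩
    · refine List.pairwise_filter.2 (List.pairwise_ofFn.2 fun i j hij h1 h2 => ?_)
      exact h i j hij (iff_of_false (of_decide_eq_true h1) (of_decide_eq_true h2))
  refine mem_shuffles_of nodup_blocks ?_ ?_ ?_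
  · exact (by rw [← hfX]; exact List.filter_sublist : (X k l).Sublist _).reverse
  · exact (by rw [← hfY]; exact List.filter_sublist : (Y k l).Sublist _).reverse
  · rw [List.perm_ext_iff_of_nodup (List.nodup_reverse.2 hnofn) nodup_blocks]
    intro v
    simp only [List.mem_reverse, List.mem_append, mem_X, mem_Y]
    constructor
    · intro _; by_cases hv : (v : ℕ) < k
      · exact Or.inl hv
      · exact Or.inr hv
    · intro _; exact hmem v

theorem exists_isShuffle_of_mem {c : List (Fin (k + l))}
    (hc : c ∈ shuffles (X k l).reverse (Y k l).reverse) :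
    ∃ σ : Equiv.Perm (Fin (k + l)), IsShuffle k l σ ∧ (List.ofFn ⇑σ).reverse = c := by
  obtain ⟨hA, hB, hp⟩ := of_mem_shuffles hc
  set L := c.reverse with hLdef
  have hLnd : L.Nodup := List.nodup_reverse.2 (hp.symm.nodup nodup_blocks)
  have hper' : L.Perm ((X k l).reverse ++ (Y k l).reverse) := (c.reverse_perm).trans hp
  have hlen : L.length = k + l := by
    have := hper'.length_eq
    simpa [X, Y] using this
  have hmemL : ∀ v : Fin (k + l), v ∈ L := fun v => by
    rw [hper'.mem_iff]
    simp only [List.mem_append, List.mem_reverse, mem_X, mem_Y]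
    by_cases hv : (v : ℕ) < k
    · exact Or.inl hv
    · exact Or.inr hv
  have ginj : Function.Injective (fun i : Fin (k + l) => L.get (Fin.cast hlen.symm i)) :=
    fun i j hij => by
      have h2 := List.nodup_iff_injective_get.1 hLnd hij
      exact Fin.cast_injective _ h2
  let σ : Equiv.Perm (Fin (k + l)) :=
    Equiv.ofBijective _ ((Finite.injective_iff_bijective).1 ginj)
  have hσ : ∀ i, σ i = L.get (Fin.cast hlen.symm i) := fun _ => rfl
  have hofn : List.ofFn ⇑σ = L := by
    refine List.ext_get (by simp [hlen]) fun i h1 h2 => ?_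
    rw [List.get_ofFn, hσ]
    congr 1
  have hXL : (X k l).Sublist L := by
    have := hA.reverse
    simpa using this
  have hYL : (Y k l).Sublist L := by
    have := hB.reverse
    simpa using this
  have hfX : L.filter (fun v : Fin (k + l) => decide ((v : ℕ) < k)) = X k l := by
    refine sublist_eq_of_perm hLnd List.filter_sublist hXL ?_
    rw [List.perm_ext_iff_of_nodup (hLnd.filter _) nodup_X]
    intro v
    simp only [List.mem_filter, decide_eq_true_eq, mem_X]
    exact ⟨fun h => h.2, fun h => ⟨hmemL v, h⟩⟩
  have hfY : L.filter (fun v : Fin (k + l) => decide (¬ (v : ℕ) < k)) = Y k l := by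
    refine sublist_eq_of_perm hLnd List.filter_sublist hYL ?_
    rw [List.perm_ext_iff_of_nodup (hLnd.filter _) nodup_Y]
    intro v
    simp only [List.mem_filter, decide_eq_true_eq, mem_Y]
    exact ⟨fun h => h.2, fun h => ⟨hmemL v, h⟩⟩
  have q1 : List.Pairwise (· < ·) (L.filter (fun v : Fin (k + l) => decide ((v : ℕ) < k))) := by
    rw [hfX]; exact pairwise_X
  have q2 : List.Pairwise (· < ·) (L.filter (fun v : Fin (k + l) => decide (¬ (v : ℕ) < k))) := by
    rw [hfY]; exact pairwise_Y
  have p1 : L.Pairwise (fun u v : Fin (k + l) => (u : ℕ) < k → (v : ℕ) < k → u < v) :=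
    (List.pairwise_filter.1 q1).imp fun h h1 h2 => h (decide_eq_true h1) (decide_eq_true h2)
  have p2 : L.Pairwise (fun u v : Fin (k + l) => ¬ (u : ℕ) < k → ¬ (v : ℕ) < k → u < v) :=
    (List.pairwise_filter.1 q2).imp fun h h1 h2 => h (decide_eq_true h1) (decide_eq_true h2)
  have pR : L.Pairwise (fun u v : Fin (k + l) => (((u : ℕ) < k ↔ (v : ℕ) < k) → u < v)) := by
    refine (p1.and p2).imp ?_
    rintro u v ⟨h1, h2⟩ hiff
    by_cases hu : (u : ℕ) < k
    · exact h1 hu (hiff.1 hu)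
    · exact h2 hu (fun hv => hu (hiff.2 hv))
  refine ⟨σ, ?_, by rw [hofn, hLdef, List.reverse_reverse]⟩
  intro i j hij
  have := List.pairwise_iff_get.1 pR (Fin.cast hlen.symm i) (Fin.cast hlen.symm j)
    (by simp only [Fin.lt_def, Fin.coe_cast]; exact hij)
  rw [hσ, hσ]
  exact this

end Blocks
open Finset in
theorem main {F : Type*} [Field F] (k l : ℕ) (p : Fin (k + l) → F)
    (h3 : ∀ σ : Equiv.Perm (Fin (k + l)), IsShuffle k l σ →
      ∀ j : Fin (k + l), ∑ i ∈ Finset.Iic j, p (σ i) ≠ 0) :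
    (∏ j : Fin k, ∑ i ∈ Finset.Iic j, p (Fin.castAdd l i))⁻¹ *
      (∏ j : Fin l, ∑ i ∈ Finset.Iic j, p (Fin.natAdd k i))⁻¹ =
    ∑ σ ∈ Finset.univ.filter (IsShuffle k l),
      (∏ j : Fin (k + l), ∑ i ∈ Finset.Iic j, p (σ i))⁻¹ := by
  classical
  have hA : ((X k l).reverse).map p
      = (List.ofFn (fun i : Fin k => p (Fin.castAdd l i))).reverse := by
    rw [List.map_reverse, X, List.map_ofFn]; rfl
  have hB : ((Y k l).reverse).map p
      = (List.ofFn (fun i : Fin l => p (Fin.natAdd k i))).reverse := by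
    rw [List.map_reverse, Y, List.map_ofFn]; rfl
  have hyp : ∀ c ∈ shuffles (((X k l).reverse).map p) (((Y k l).reverse).map p), nzSuf c := by
    rw [shuffles_map]
    intro c hc
    rw [List.mem_map] at hc
    obtain ⟨d, hd, rfl⟩ := hc
    obtain ⟨σ, hσ, rfl⟩ := exists_isShuffle_of_mem hd
    rw [List.map_reverse, List.map_ofFn]
    exact nzSuf_rev _ _ (h3 σ hσ)
  have KEY := key _ _ hyp
  rw [hA, hB] at KEY
  rw [S_rev k (fun i => p (Fin.castAdd l i)), S_rev l (fun i => p (Fin.natAdd k i))] at KEY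
  rw [KEY]
  rw [← hA, ← hB, shuffles_map, List.map_map]
  have hnd : (shuffles (X k l).reverse (Y k l).reverse).Nodup := shuffles_nodup nodup_blocks
  rw [← List.sum_toFinset _ hnd]
  refine (Finset.sum_bij (fun (σ : Equiv.Perm (Fin (k + l))) (_ : σ ∈ Finset.univ.filter (IsShuffle k l)) => (List.ofFn ⇑σ).reverse) ?_ ?_ ?_ ?_).symm
  · intro σ hσ
    rw [List.mem_toFinset]
    exact mem_shuffles_of_isShuffle σ (by simpa using hσ)
  · intro σ1 h1 σ2 h2 heq
    exact Equiv.coe_fn_injective (List.ofFn_injective (List.reverse_injective heq))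
  · intro d hd
    obtain ⟨σ, hσ, hrev⟩ := exists_isShuffle_of_mem (List.mem_toFinset.1 hd)
    exact ⟨σ, by simpa using hσ, hrev⟩
  · intro σ hσ
    simp only [Function.comp_apply]
    rw [List.map_reverse, List.map_ofFn]
    rw [S_rev (k + l) (p ∘ ⇑σ)]
    rfl


end ShufAux


/-- The shuffle identity for the products of partial sums:
    1/(p₁(p₁+p₂)⋯(p₁+⋯+p_k)) · 1/(p_{k+1}⋯(p_{k+1}+⋯+p_{k+l}))
    = ∑_{(k,l)-shuffles σ} 1/(p_{σ(1)}(p_{σ(1)}+p_{σ(2)})⋯(p_{σ(1)}+⋯+p_{σ(k+l)})). -/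
theorem shuffle_identity {F : Type*} [Field F] (k l : ℕ) (p : Fin (k + l) → F)
    (h1 : ∀ j : Fin k, ∑ i ∈ Finset.Iic j, p (Fin.castAdd l i) ≠ 0)
    (h2 : ∀ j : Fin l, ∑ i ∈ Finset.Iic j, p (Fin.natAdd k i) ≠ 0)
    (h3 : ∀ σ : Equiv.Perm (Fin (k + l)), IsShuffle k l σ →
      ∀ j : Fin (k + l), ∑ i ∈ Finset.Iic j, p (σ i) ≠ 0) :
    (∏ j : Fin k, ∑ i ∈ Finset.Iic j, p (Fin.castAdd l i))⁻¹ *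
      (∏ j : Fin l, ∑ i ∈ Finset.Iic j, p (Fin.natAdd k i))⁻¹ =
    ∑ σ ∈ Finset.univ.filter (IsShuffle k l),
      (∏ j : Fin (k + l), ∑ i ∈ Finset.Iic j, p (σ i))⁻¹ :=
  ShufAux.main k l p h3
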